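/- arXiv:1607.08150 — 2 statements merged into one kernel-verified Lean document; each statement's English description precedes it below -/
import Mathlib

section
/- Let p, q ≥ 1 be integers, ℓ ≥ 0, and α real with −ℓ ≤ α ≤ ℓ. Let τ, rβ, rγ be real numbers with 0 ≤ rβ, rγ ≤ min(p,q), satisfying −rβ·ℓ + α(rβ − 2pq/(p+q)) ≤ τ ≤ rγ·ℓ + α(rγ − 2pq/(p+q)). Then min(p,q)·(−α·|p−q|/(p+q) − ℓ) ≤ τ ≤ min(p,q)·(ℓ − α·|p−q|/(p+q)). -/
/-!
With `m = min p q` one has `2pq/(p+q) = m + m|p-q|/(p+q)`, because `min * max = pq`,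
`min + max = p + q` and `max - min = |p - q|`. Substituting this into the two hypotheses, the
lower bound differs from the claimed one by `(m - rβ)(ℓ - α) ≥ 0` and the upper bound by
`(m - rγ)(ℓ + α) ≥ 0`.
-/

theorem min_mul_add_add_min_mul_abs_sub (a b : ℝ) :
    min a b * (a + b) + min a b * |a - b| = 2 * (a * b) := by
  rw [← min_add_max a b, ← max_sub_min_eq_abs' a b, ← min_mul_max a b]
  ring

theorem two_mul_mul_div_add_eq_min_add {a b : ℝ} (ha : 0 ≤ a) (hb : 0 ≤ b) :
    2 * a * b / (a + b) = min a b + min a b * |a - b| / (a + b) := by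
  rcases (add_nonneg ha hb).eq_or_lt with hab | hab
  · obtain ⟨rfl, rfl⟩ : a = 0 ∧ b = 0 := ⟨by linarith, by linarith⟩
    simp
  · field_simp
    linarith [min_mul_add_add_min_mul_abs_sub a b]

theorem toledo_bounds_ii_general (p q : ℕ) (ℓ α τ rβ rγ : ℝ)
    (hα1 : -ℓ ≤ α) (hα2 : α ≤ ℓ)
    (hrβ : rβ ≤ min p q) (hrγ : rγ ≤ min p q)
    (hlow : -rβ * ℓ + α * (rβ - 2 * p * q / (p + q)) ≤ τ)
    (hhigh : τ ≤ rγ * ℓ + α * (rγ - 2 * p * q / (p + q))) :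
    (min p q : ℝ) * (-α * |(p : ℝ) - q| / (p + q) - ℓ) ≤ τ ∧
    τ ≤ (min p q : ℝ) * (ℓ - α * |(p : ℝ) - q| / (p + q)) := by
  rw [two_mul_mul_div_add_eq_min_add p.cast_nonneg q.cast_nonneg] at hlow hhigh
  rw [Nat.cast_min] at hrβ hrγ
  constructor
  · linear_combination hlow + mul_nonneg (sub_nonneg.2 hrβ) (sub_nonneg.2 hα2)
  · linear_combination hhigh + mul_nonneg (sub_nonneg.2 hrγ) (neg_le_iff_add_nonneg.1 hα1)

theorem toledo_bounds_ii (p q : ℕ) (hp : 1 ≤ p) (hq : 1 ≤ q) (ℓ α τ rβ rγ : ℝ)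
    (hℓ : 0 ≤ ℓ) (hα1 : -ℓ ≤ α) (hα2 : α ≤ ℓ)
    (hrβ0 : 0 ≤ rβ) (hrβ : rβ ≤ min p q) (hrγ0 : 0 ≤ rγ) (hrγ : rγ ≤ min p q)
    (hlow : -rβ * ℓ + α * (rβ - 2 * p * q / (p + q)) ≤ τ)
    (hhigh : τ ≤ rγ * ℓ + α * (rγ - 2 * p * q / (p + q))) :
    (min p q : ℝ) * (-α * |(p : ℝ) - q| / (p + q) - ℓ) ≤ τ ∧
    τ ≤ (min p q : ℝ) * (ℓ - α * |(p : ℝ) - q| / (p + q)) :=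
  toledo_bounds_ii_general p q ℓ α τ rβ rγ hα1 hα2 hrβ hrγ hlow hhigh
end

section
/- Let p, q ≥ 1 be integers, ℓ ≥ 0, α ≥ ℓ, and τ, rβ, rγ real with 0 ≤ rβ, rγ ≤ min(p,q), satisfying −rβ·ℓ + α(rβ − 2pq/(p+q)) ≤ τ ≤ rγ·ℓ + α(rγ − 2pq/(p+q)). Then −α·2pq/(p+q) ≤ τ ≤ min(p,q)·(ℓ − α·|p−q|/(p+q)). -/
/-!
Write `D = 2pq/(p+q)`. The lower bound of the hypothesis is `rβ (α - ℓ) - α D`, which is at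
least `-α D` since `α ≥ ℓ`; the upper bound is `rγ (ℓ + α) - α D`, which is at most
`min p q (ℓ + α) - α D` since `ℓ + α ≥ 0`. The upper estimate then follows from
`D - min p q = min p q |p - q| / (p + q)`, a consequence of `pq = min p q · max p q`.
-/

lemma two_mul_mul_sub_min_mul_add (a b : ℝ) :
    2 * a * b - min a b * (a + b) = min a b * |a - b| := by
  rcases le_total a b with h | h
  · rw [min_eq_left h, abs_of_nonpos (sub_nonpos.2 h)]; ring
  · rw [min_eq_right h, abs_of_nonneg (sub_nonneg.2 h)]; ring

lemma two_mul_mul_div_add_sub_min {a b : ℝ} (ha : 0 ≤ a) (hb : 0 ≤ b) :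
    2 * a * b / (a + b) - min a b = min a b * |a - b| / (a + b) := by
  rcases (add_nonneg ha hb).eq_or_lt with hab | hab
  · obtain ⟨rfl, rfl⟩ : a = 0 ∧ b = 0 := ⟨by linarith, by linarith⟩
    simp
  · rw [eq_div_iff hab.ne', sub_mul, div_mul_cancel₀ _ hab.ne', two_mul_mul_sub_min_mul_add]

theorem toledo_bounds_iii_general (p q : ℕ) (ℓ α τ rβ rγ : ℝ)
    (hℓ : 0 ≤ ℓ) (hα : ℓ ≤ α)
    (hrβ0 : 0 ≤ rβ) (hrγ : rγ ≤ min p q)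
    (hlow : -rβ * ℓ + α * (rβ - 2 * p * q / (p + q)) ≤ τ)
    (hhigh : τ ≤ rγ * ℓ + α * (rγ - 2 * p * q / (p + q))) :
    -α * (2 * p * q / (p + q)) ≤ τ ∧
    τ ≤ (min p q : ℝ) * (ℓ - α * |(p : ℝ) - q| / (p + q)) := by
  have hD := two_mul_mul_div_add_sub_min (a := (p : ℝ)) p.cast_nonneg q.cast_nonneg
  refine ⟨by linarith [mul_nonneg hrβ0 (sub_nonneg.2 hα)], ?_⟩
  have hrγ' : rγ * (ℓ + α) ≤ min (p : ℝ) q * (ℓ + α) :=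
    mul_le_mul_of_nonneg_right (by exact_mod_cast hrγ) (by linarith)
  calc τ ≤ min (p : ℝ) q * (ℓ + α) - α * (2 * p * q / (p + q)) := by linarith
    _ = min (p : ℝ) q * (ℓ - α * |(p : ℝ) - q| / (p + q)) := by linear_combination (-α) * hD

theorem toledo_bounds_iii (p q : ℕ) (hp : 1 ≤ p) (hq : 1 ≤ q) (ℓ α τ rβ rγ : ℝ)
    (hℓ : 0 ≤ ℓ) (hα : ℓ ≤ α)
    (hrβ0 : 0 ≤ rβ) (hrβ : rβ ≤ min p q) (hrγ0 : 0 ≤ rγ) (hrγ : rγ ≤ min p q)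
    (hlow : -rβ * ℓ + α * (rβ - 2 * p * q / (p + q)) ≤ τ)
    (hhigh : τ ≤ rγ * ℓ + α * (rγ - 2 * p * q / (p + q))) :
    -α * (2 * p * q / (p + q)) ≤ τ ∧
    τ ≤ (min p q : ℝ) * (ℓ - α * |(p : ℝ) - q| / (p + q)) :=
  toledo_bounds_iii_general p q ℓ α τ rβ rγ hℓ hα hrβ0 hrγ hlow hhigh
end
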